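/- arXiv:2412.08146 — 2 statements merged into one kernel-verified Lean document; each statement's English description precedes it below -/
import Mathlib

section
/- Let C be a finitely generated ℤ-graded, ℤ-filtered free chain complex over 𝔽₂[U], and for t ∈ [0,1] define Υ_C(t) as the maximum gr_t-grading of a homogeneous non-torsion element of the homology of C^t over ℛ. Then Υ_{C⊗𝒲}(t) = Υ_C(t) for all t ∈ [0,1]. -/
open scoped NNReal
open Polynomial

abbrev F2 := ZMod 2
abbrev PU := Polynomial F2
abbrev LongR := HahnSeries ℝ≥0 F2

noncomputable example : CommRing LongR := inferInstance

noncomputable def v (α : ℝ≥0) : LongR := HahnSeries.single α 1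

/-- A finitely generated, free, `ℤ`-graded `ℤ`-filtered chain complex over `𝔽₂[U]`,
presented by a basis with Maslov grading `M`, Alexander filtration level `A`, and
structure coefficients `c`, so that `∂ x = ∑ y, c x y • U ^ ((M y - M x + 1)/2) • y`. -/
structure BasedComplex where
  ι : Type
  [fin : Fintype ι]
  [dec : DecidableEq ι]
  M : ι → ℤ
  A : ι → ℤ
  c : ι → ι → F2
  hM : ∀ x y, c x y ≠ 0 → ∃ k : ℕ, M y = M x - 1 + 2 * k
  hA : ∀ x y, c x y ≠ 0 → 2 * (A y - A x) ≤ M y - M x + 1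
  d2 : ∀ x z, (∑ y, c x y * c y z) = 0

attribute [instance] BasedComplex.fin BasedComplex.dec

namespace BasedComplex

variable (C : BasedComplex)

/-- The underlying free `𝔽₂[U]`-module. -/
abbrev PMod := C.ι → PU

/-- The differential of the complex over `𝔽₂[U]`. -/
noncomputable def pDiff : C.PMod →ₗ[PU] C.PMod where
  toFun f := fun y => ∑ x, f x * (Polynomial.C (C.c x y) * Polynomial.X ^ ((C.M y - C.M x + 1) / 2).toNat)
  map_add' f g := by
    funext y
    simp [add_mul, Finset.sum_add_distrib]
  map_smul' r f := by
    funext y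
    simp [Finset.mul_sum, mul_assoc]

/-- Homogeneous of Maslov degree `m` (the basis element `U^k x` has degree `M x - 2k`). -/
def PHomog (m : ℤ) (f : C.PMod) : Prop :=
  ∀ x k, (f x).coeff k ≠ 0 → C.M x - 2 * (k : ℤ) = m

/-- Lies in Alexander filtration level `≤ a` (the element `U^k x` has level `A x - k`). -/
def PInFilt (a : ℤ) (f : C.PMod) : Prop :=
  ∀ x k, (f x).coeff k ≠ 0 → C.A x - (k : ℤ) ≤ a

end BasedComplex

/-- A graded, filtered chain map over `𝔽₂[U]`. -/
structure PChainMap (C D : BasedComplex) where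
  toFun : C.PMod →ₗ[PU] D.PMod
  comm : ∀ f, toFun (C.pDiff f) = D.pDiff (toFun f)
  graded : ∀ m f, C.PHomog m f → D.PHomog m (toFun f)
  filtered : ∀ a f, C.PInFilt a f → D.PInFilt a (toFun f)

/-- Filtered chain homotopy between two maps (char 2, so signs are irrelevant). -/
def PHomotopic (C D : BasedComplex) (φ ψ : C.PMod →ₗ[PU] D.PMod) : Prop :=
  ∃ H : C.PMod →ₗ[PU] D.PMod,
    (∀ a f, C.PInFilt a f → D.PInFilt a (H f)) ∧
    (∀ m f, C.PHomog m f → D.PHomog (m + 1) (H f)) ∧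
    ∀ f, D.pDiff (H f) + H (C.pDiff f) = φ f + ψ f

/-- Filtered chain homotopy equivalence of complexes over `𝔽₂[U]`. -/
def FilteredHtpyEquiv (C D : BasedComplex) : Prop :=
  ∃ (φ : PChainMap C D) (ψ : PChainMap D C),
    PHomotopic C C (ψ.toFun.comp φ.toFun) LinearMap.id ∧
    PHomotopic D D (φ.toFun.comp ψ.toFun) LinearMap.id

namespace BasedComplex

variable (C : BasedComplex)

/-- `gr_t` of a basis element: `M x - t * A x`. -/
noncomputable def grt (t : ℝ) (x : C.ι) : ℝ := (C.M x : ℝ) - t * (C.A x : ℝ)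

/-- Exponent of `v` in the `t`-modified differential. -/
noncomputable def texp (t : ℝ) (x y : C.ι) : ℝ≥0 := (C.grt t y - C.grt t x + 1).toNNReal

/-- The `t`-modified differential `∂_t x = ∑ y, c x y • v ^ (gr_t y - gr_t x + 1) • y`,
on the `t`-modified complex `C^t = ⊕_x ℛ⟨x⟩`. -/
noncomputable def tDiff (t : ℝ) : (C.ι → LongR) →ₗ[LongR] (C.ι → LongR) where
  toFun f := fun y => ∑ x, f x * HahnSeries.single (C.texp t x y) (C.c x y)
  map_add' f g := by
    funext y
    simp [add_mul, Finset.sum_add_distrib]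
  map_smul' r f := by
    funext y
    simp [Finset.mul_sum, mul_assoc]

/-- Homogeneous of `gr_t`-degree `d` in `C^t` (the element `v^α x` has degree `gr_t x - α`). -/
def THomog (t d : ℝ) (f : C.ι → LongR) : Prop :=
  ∀ x α, (f x).coeff α ≠ 0 → C.grt t x - (α : ℝ) = d

noncomputable abbrev tCycles (t : ℝ) : Submodule LongR (C.ι → LongR) :=
  LinearMap.ker (C.tDiff t)

/-- Homology of the `t`-modified complex, as an `ℛ`-module. -/
noncomputable abbrev tHomology (t : ℝ) :=
  C.tCycles t ⧸ (LinearMap.range (C.tDiff t)).comap (C.tCycles t).subtype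

noncomputable def tClass (t : ℝ) (f : C.ι → LongR) (hf : f ∈ C.tCycles t) :
    C.tHomology t :=
  Submodule.Quotient.mk ⟨f, hf⟩

/-- The set of `gr_t`-gradings of homogeneous, non-torsion classes in `H(C^t)`. -/
noncomputable def UpsSet (t : ℝ) : Set ℝ :=
  {d | ∃ (f : C.ι → LongR) (hf : f ∈ C.tCycles t),
    C.THomog t d f ∧ ∀ r : LongR, r ≠ 0 → r • C.tClass t f hf ≠ 0}

end BasedComplex

/-- A graded chain map of `t`-modified complexes over `ℛ`. -/
def TChainMapProp (C D : BasedComplex) (t : ℝ)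
    (φ : (C.ι → LongR) →ₗ[LongR] (D.ι → LongR)) : Prop :=
  (∀ f, φ (C.tDiff t f) = D.tDiff t (φ f)) ∧
  ∀ d f, C.THomog t d f → D.THomog t d (φ f)

/-- Graded chain homotopy equivalence of `t`-modified complexes over `ℛ`. -/
def THtpyEquiv (C D : BasedComplex) (t : ℝ) : Prop :=
  ∃ (φ : (C.ι → LongR) →ₗ[LongR] (D.ι → LongR))
    (ψ : (D.ι → LongR) →ₗ[LongR] (C.ι → LongR))
    (H₁ : (C.ι → LongR) →ₗ[LongR] (C.ι → LongR))
    (H₂ : (D.ι → LongR) →ₗ[LongR] (D.ι → LongR)),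
    TChainMapProp C D t φ ∧ TChainMapProp D C t ψ ∧
    (∀ d f, C.THomog t d f → C.THomog t (d + 1) (H₁ f)) ∧
    (∀ f, C.tDiff t (H₁ f) + H₁ (C.tDiff t f) = ψ (φ f) + f) ∧
    (∀ d f, D.THomog t d f → D.THomog t (d + 1) (H₂ f)) ∧
    (∀ f, D.tDiff t (H₂ f) + H₂ (D.tDiff t f) = φ (ψ f) + f)

namespace BasedComplex

/-- `C ⊗ 𝒲`: a second copy of the generators in bidegree `(M-1, A-1)`, with
block-diagonal differential (the differential on `𝒲` vanishes). -/
def tensorW (C : BasedComplex) : BasedComplex where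
  ι := C.ι ⊕ C.ι
  M := Sum.elim C.M fun x => C.M x - 1
  A := Sum.elim C.A fun x => C.A x - 1
  c := fun p q =>
    match p, q with
    | .inl x, .inl y => C.c x y
    | .inr x, .inr y => C.c x y
    | _, _ => 0
  hM := by
    rintro (x | x) (y | y) h <;> simp_all <;>
      obtain ⟨k, hk⟩ := C.hM _ _ h <;> exact ⟨k, by omega⟩
  hA := by
    rintro (x | x) (y | y) h <;> simp_all <;> have := C.hA _ _ h <;> omega
  d2 := by
    rintro (x | x) (z | z) <;>
      simp [Fintype.sum_sum_type] <;> simpa using C.d2 x z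

/-- The dual complex `C* = Hom_{𝔽₂[U]}(C, 𝔽₂[U])`, in the basis dual to the given one. -/
def dualC (C : BasedComplex) : BasedComplex where
  ι := C.ι
  M := fun x => -C.M x
  A := fun x => -C.A x
  c := fun x y => C.c y x
  hM := by
    intro x y h
    obtain ⟨k, hk⟩ := C.hM y x h
    exact ⟨k, show -C.M y = -C.M x - 1 + 2 * k by omega⟩
  hA := by
    intro x y h
    have := C.hA y x h
    show 2 * (-C.A y - -C.A x) ≤ -C.M y - -C.M x + 1
    omega
  d2 := by
    intro x z
    simpa [mul_comm] using C.d2 z x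

/-- Shift of grading (by `a`) and filtration (by `b`). -/
def shiftC (C : BasedComplex) (a b : ℤ) : BasedComplex where
  ι := C.ι
  M := fun x => C.M x + a
  A := fun x => C.A x + b
  c := C.c
  hM := by
    intro x y h
    obtain ⟨k, hk⟩ := C.hM x y h
    exact ⟨k, show C.M y + a = C.M x + a - 1 + 2 * k by omega⟩
  hA := by
    intro x y h
    have := C.hA x y h
    show 2 * ((C.A y + b) - (C.A x + b)) ≤ (C.M y + a) - (C.M x + a) + 1
    omega
  d2 := C.d2

end BasedComplex

/-! A cycle of `C^t ⊗ W_t` is a pair `(f, g)` of cycles of `C^t`, homogeneous of `gr_t`-degree `d`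
exactly when `f` has degree `d` and `g` has degree `d + (1 - t)`, because the second copy of the
generators is shifted by `-1 + t`. The pair is torsion iff both components are: multiply their
annihilators, which is nonzero since `ℛ` is a domain. So every degree of a non-torsion class of
`C ⊗ 𝒲` is at most a degree of a non-torsion class of `C`, as `1 - t ≥ 0`, while `f ↦ (f, 0)`
embeds the non-torsion classes of `C` into those of `C ⊗ 𝒲` with the same degree. -/

namespace BasedComplex

variable (C : BasedComplex) (t : ℝ)

lemma grt_tensorW_inr (x : C.ι) : C.tensorW.grt t (.inr x) = C.grt t x - (1 - t) := by
  simp only [grt, tensorW, Sum.elim_inr]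
  push_cast
  ring

lemma texp_tensorW_inr (x y : C.ι) : C.tensorW.texp t (.inr x) (.inr y) = C.texp t x y := by
  simp only [texp, grt_tensorW_inr, sub_sub_sub_cancel_right]

-- `C.tensorW.ι` is `C.ι ⊕ C.ι` only up to unfolding, so `Sum.forall` does not fire by itself.
lemma forall_tensorW_ι {p : C.tensorW.ι → Prop} :
    (∀ x, p x) ↔ (∀ x, p (.inl x)) ∧ ∀ x, p (.inr x) :=
  Sum.forall

lemma tDiff_tensorW_inl (F : C.tensorW.ι → LongR) (y : C.ι) :
    C.tensorW.tDiff t F (.inl y) = C.tDiff t (F ∘ .inl) y := by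
  show ∑ x : C.ι ⊕ C.ι, _ = _
  simp only [Fintype.sum_sum_type, tensorW, map_zero, mul_zero, Finset.sum_const_zero, add_zero,
    tDiff, LinearMap.coe_mk, AddHom.coe_mk]
  rfl

lemma tDiff_tensorW_inr (F : C.tensorW.ι → LongR) (y : C.ι) :
    C.tensorW.tDiff t F (.inr y) = C.tDiff t (F ∘ .inr) y := by
  show ∑ x : C.ι ⊕ C.ι, _ = _
  simp only [Fintype.sum_sum_type, texp_tensorW_inr]
  simp only [tensorW, map_zero, mul_zero, Finset.sum_const_zero, zero_add, tDiff, LinearMap.coe_mk,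
    AddHom.coe_mk]
  rfl

lemma tDiff_tensorW_eq_zero_iff (F : C.tensorW.ι → LongR) :
    C.tensorW.tDiff t F = 0 ↔ C.tDiff t (F ∘ .inl) = 0 ∧ C.tDiff t (F ∘ .inr) = 0 := by
  simp only [funext_iff, forall_tensorW_ι, tDiff_tensorW_inl, tDiff_tensorW_inr, Pi.zero_apply]

lemma tHomog_tensorW_iff (d : ℝ) (F : C.tensorW.ι → LongR) :
    C.tensorW.THomog t d F ↔
      C.THomog t d (F ∘ .inl) ∧ C.THomog t (d + (1 - t)) (F ∘ .inr) := by
  simp only [THomog, forall_tensorW_ι, grt_tensorW_inr, sub_eq_iff_eq_add, add_right_comm d (1 - t)]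
  rfl

def IsTorsionModBoundaries (f : C.ι → LongR) : Prop :=
  ∃ r : LongR, r ≠ 0 ∧ r • f ∈ LinearMap.range (C.tDiff t)

lemma smul_tClass_eq_zero_iff (r : LongR) (f : C.ι → LongR) (hf : f ∈ C.tCycles t) :
    r • C.tClass t f hf = 0 ↔ r • f ∈ LinearMap.range (C.tDiff t) := by
  rw [tClass, ← Submodule.Quotient.mk_smul, Submodule.Quotient.mk_eq_zero]
  rfl

lemma mem_upsSet_iff (d : ℝ) :
    d ∈ C.UpsSet t ↔ ∃ f, C.tDiff t f = 0 ∧ C.THomog t d f ∧ ¬ C.IsTorsionModBoundaries t f := by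
  constructor
  · rintro ⟨f, hf, hhom, hnt⟩
    exact ⟨f, hf, hhom, fun ⟨r, hr, hr₀⟩ => hnt r hr ((C.smul_tClass_eq_zero_iff t r f hf).2 hr₀)⟩
  · rintro ⟨f, hf, hhom, hnt⟩
    exact ⟨f, hf, hhom, fun r hr hr₀ => hnt ⟨r, hr, (C.smul_tClass_eq_zero_iff t r f hf).1 hr₀⟩⟩

lemma isTorsionModBoundaries_tensorW_iff (F : C.tensorW.ι → LongR) :
    C.tensorW.IsTorsionModBoundaries t F ↔
      C.IsTorsionModBoundaries t (F ∘ .inl) ∧ C.IsTorsionModBoundaries t (F ∘ .inr) := by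
  constructor
  · rintro ⟨r, hr, G, hG⟩
    refine ⟨⟨r, hr, G ∘ .inl, funext fun y => ?_⟩, ⟨r, hr, G ∘ .inr, funext fun y => ?_⟩⟩
    · rw [← tDiff_tensorW_inl, hG]
      rfl
    · rw [← tDiff_tensorW_inr, hG]
      rfl
  · rintro ⟨⟨r₁, hr₁, g₁, hg₁⟩, ⟨r₂, hr₂, g₂, hg₂⟩⟩
    refine ⟨r₁ * r₂, mul_ne_zero hr₁ hr₂, (Sum.elim (r₂ • g₁) (r₁ • g₂) : C.tensorW.ι → LongR), ?_⟩
    refine funext (C.forall_tensorW_ι.2 ⟨fun y => ?_, fun y => ?_⟩)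
    · refine (C.tDiff_tensorW_inl t _ y).trans ?_
      change C.tDiff t (r₂ • g₁) y = r₁ * r₂ * (F ∘ .inl) y
      rw [map_smul, hg₁]
      simp only [Pi.smul_apply, smul_eq_mul]
      ring
    · refine (C.tDiff_tensorW_inr t _ y).trans ?_
      change C.tDiff t (r₁ • g₂) y = r₁ * r₂ * (F ∘ .inr) y
      rw [map_smul, hg₂]
      simp only [Pi.smul_apply, smul_eq_mul]
      ring

lemma upsSet_subset_upsSet_tensorW : C.UpsSet t ⊆ C.tensorW.UpsSet t := by
  intro d hd
  obtain ⟨f, hf, hhom, hnt⟩ := (C.mem_upsSet_iff t d).1 hd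
  refine (C.tensorW.mem_upsSet_iff t d).2 ⟨(Sum.elim f 0 : C.tensorW.ι → LongR), ?_, ?_, ?_⟩
  · exact (C.tDiff_tensorW_eq_zero_iff t _).2 ⟨hf, map_zero _⟩
  · exact (C.tHomog_tensorW_iff t d _).2 ⟨hhom, fun x α h => absurd rfl h⟩
  · exact fun h => hnt ((C.isTorsionModBoundaries_tensorW_iff t _).1 h).1

lemma exists_mem_upsSet_ge_of_mem_upsSet_tensorW (ht : t ≤ 1) {d : ℝ}
    (hd : d ∈ C.tensorW.UpsSet t) :
    ∃ e ∈ C.UpsSet t, d ≤ e := by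
  obtain ⟨F, hF, hhom, hnt⟩ := (C.tensorW.mem_upsSet_iff t d).1 hd
  rw [tDiff_tensorW_eq_zero_iff] at hF
  rw [tHomog_tensorW_iff] at hhom
  rw [isTorsionModBoundaries_tensorW_iff] at hnt
  by_cases h₁ : C.IsTorsionModBoundaries t (F ∘ .inl)
  · exact ⟨d + (1 - t), (C.mem_upsSet_iff t _).2 ⟨_, hF.2, hhom.2, fun h₂ => hnt ⟨h₁, h₂⟩⟩,
      by linarith⟩
  · exact ⟨d, (C.mem_upsSet_iff t d).2 ⟨_, hF.1, hhom.1, h₁⟩, le_rfl⟩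

end BasedComplex

/-- For a finitely generated free `ℤ`-graded, `ℤ`-filtered chain complex `C` over `𝔽₂[U]`
and `t ∈ [0,1]`, tensoring with the two-dimensional complex `𝒲` (generators in bidegrees
`(0,0)` and `(−1,−1)`) does not change the Upsilon invariant:
`Υ_{C ⊗ 𝒲}(t) = Υ_C(t)`, where `Υ` is the maximal `gr_t`-grading of a homogeneous
non-torsion class in the homology of the `t`-modified complex over `ℛ`. -/
theorem upsilon_tensorW (C : BasedComplex) :
    ∀ t ∈ Set.Icc (0 : ℝ) 1, sSup ((C.tensorW).UpsSet t) = sSup (C.UpsSet t) := by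
  intro t ht
  exact csSup_eq_csSup_of_forall_exists_le
    (fun _ hd => C.exists_mem_upsSet_ge_of_mem_upsSet_tensorW t ht.2 hd)
    (fun d hd => ⟨d, C.upsSet_subset_upsSet_tensorW t hd, le_rfl⟩)
end

section
/- If two ℤ-graded, ℤ-filtered chain complexes over 𝔽₂[U] are filtered quasi-isomorphic, then they are filtered chain homotopy equivalent; in particular a filtered quasi-isomorphism between such complexes is itself a filtered chain homotopy equivalence. -/
open scoped NNReal
open Polynomial

noncomputable example : CommRing LongR := inferInstance

namespace BasedComplex

/-- The differential of the associated graded object `gr(C) = ⊕ ℱ_s C_d / ℱ_{s−1} C_d`: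
only the components of the differential preserving the Alexander filtration level exactly
survive. -/
noncomputable def grDiff (C : BasedComplex) : C.PMod →ₗ[PU] C.PMod where
  toFun f := fun y => ∑ x, f x *
    (if 2 * (C.A y - C.A x) = C.M y - C.M x + 1 then
        Polynomial.C (C.c x y) * Polynomial.X ^ ((C.M y - C.M x + 1) / 2).toNat
      else 0)
  map_add' f g := by
    funext y
    simp only [Pi.add_apply, add_mul]
    exact Finset.sum_add_distrib
  map_smul' r f := by
    funext y
    try dsimp only
    simp only [Pi.smul_apply, smul_eq_mul]
    rw [Finset.mul_sum]
    exact Finset.sum_congr rfl fun x _ => mul_assoc _ _ _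

end BasedComplex

/-- The associated graded map `gr(φ)` of a filtered map `φ`: only the components
preserving the Alexander filtration level exactly survive. -/
noncomputable def grTrunc (C D : BasedComplex) (φ : C.PMod →ₗ[PU] D.PMod) :
    C.PMod →ₗ[PU] D.PMod where
  toFun f := fun y => ∑ x, f x *
    (∑ k ∈ (φ (Pi.single x 1) y).support,
      if D.A y - (k : ℤ) = C.A x then
        Polynomial.monomial k ((φ (Pi.single x 1) y).coeff k)
      else 0)
  map_add' f g := by
    funext y
    simp only [Pi.add_apply, add_mul]
    exact Finset.sum_add_distrib
  map_smul' r f := by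
    funext y
    try dsimp only
    simp only [Pi.smul_apply, smul_eq_mul]
    rw [Finset.mul_sum]
    exact Finset.sum_congr rfl fun x _ => mul_assoc _ _ _

/-- `φ` is a filtered quasi-isomorphism: the induced map on the homology of the
associated graded objects is an isomorphism (stated without quotients, in char 2:
surjectivity and injectivity on homology classes). -/
def GrQuasiIso (C D : BasedComplex) (φ : C.PMod →ₗ[PU] D.PMod) : Prop :=
  (∀ g ∈ LinearMap.ker D.grDiff, ∃ f ∈ LinearMap.ker C.grDiff,
      g + grTrunc C D φ f ∈ LinearMap.range D.grDiff) ∧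
  (∀ f ∈ LinearMap.ker C.grDiff, grTrunc C D φ f ∈ LinearMap.range D.grDiff →
      f ∈ LinearMap.range C.grDiff)

/-!
On a finite basis, a graded filtered map is an `𝔽₂`-matrix: the power of `U` in each entry is
forced by the gradings. A filtered quasi-isomorphism `φ` makes the associated graded object of
its mapping cone acyclic. A complex whose associated graded object is acyclic is filtered
contractible, by induction on its rank: acyclicity forces an arrow `x₀ → y₀` with coefficient
`1` that preserves the filtration level, Gaussian elimination cancels it, and a contraction of
the smaller complex extends to the original one. Finally, the blocks of a filtered contraction
of the cone of `φ` are a homotopy inverse of `φ` and the two homotopies.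
-/

open LinearMap (ker range)
open scoped Matrix

theorem add_self_eq_zero_of_charTwo (R : Type*) {M : Type*} [Semiring R] [CharP R 2]
    [AddCommMonoid M] [Module R M] (x : M) : x + x = 0 := by
  rw [← one_smul R x, ← add_smul, CharTwo.add_self_eq_zero, zero_smul]

theorem eq_add_of_add_eq_of_charTwo (R : Type*) {M : Type*} [Semiring R] [CharP R 2]
    [AddCommMonoid M] [Module R M] {x y z : M} (h : x + y = z) : x = z + y := by
  rw [← h, add_assoc, add_self_eq_zero_of_charTwo R, add_zero]

theorem LinearMap.ker_le_range_of_retract {R M N : Type*} [Semiring R] [AddCommMonoid M]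
    [AddCommMonoid N] [Module R M] [Module R N] {d : M →ₗ[R] M} {d' : N →ₗ[R] N}
    (i : N →ₗ[R] M) (p : M →ₗ[R] N) (hi : d ∘ₗ i = i ∘ₗ d') (hp : p ∘ₗ d = d' ∘ₗ p)
    (hpi : p ∘ₗ i = LinearMap.id) (h : ker d ≤ range d) : ker d' ≤ range d' := by
  intro f hf
  obtain ⟨g, hg⟩ := h (show i f ∈ ker d by
    rw [LinearMap.mem_ker, ← LinearMap.comp_apply, hi, LinearMap.comp_apply, hf, map_zero])
  refine ⟨p g, ?_⟩
  rw [← LinearMap.comp_apply, ← hp, LinearMap.comp_apply, hg, ← LinearMap.comp_apply, hpi,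
    LinearMap.id_apply]

namespace Matrix

variable {l m n n' o q R : Type*}

theorem submatrix_mul_submatrix_of_injective [Fintype n] [Fintype n']
    [NonUnitalNonAssocSemiring R] (A : Matrix l n R) (B : Matrix n o R) {e : n' → n}
    (he : Function.Injective e) (hAB : ∀ k ∉ Set.range e, (∀ i, A i k = 0) ∨ ∀ j, B k j = 0)
    (f : m → l) (g : q → o) : A.submatrix f e * B.submatrix e g = (A * B).submatrix f g := by
  ext i j
  refine Fintype.sum_of_injective e he _ _ (fun k hk => ?_) (fun _ => rfl)
  rcases hAB k hk with h | h <;> simp [h]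

/-- The cone of a chain map `B`, in characteristic `2`, is acyclic as soon as `B` induces an
isomorphism on homology. -/
theorem ker_le_range_toLinearMapRight'_fromBlocks [Fintype m] [Fintype n] [DecidableEq m]
    [DecidableEq n] [CommRing R] [CharP R 2] {A : Matrix m m R} {B : Matrix m n R}
    {D : Matrix n n R} (hB : A * B = B * D)
    (hsurj : ∀ y ∈ ker D.toLinearMapRight', ∃ x ∈ ker A.toLinearMapRight',
      y + B.toLinearMapRight' x ∈ range D.toLinearMapRight')
    (hinj : ∀ x ∈ ker A.toLinearMapRight',
      B.toLinearMapRight' x ∈ range D.toLinearMapRight' → x ∈ range A.toLinearMapRight') :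
    ker (fromBlocks A B 0 D).toLinearMapRight' ≤ range (fromBlocks A B 0 D).toLinearMapRight' := by
  intro v hv
  set x := v ∘ Sum.inl
  set y := v ∘ Sum.inr
  have hv' : Sum.elim (x ᵥ* A) (x ᵥ* B + y ᵥ* D) = 0 := by
    simpa [vecMul_fromBlocks] using hv
  have hxA : x ᵥ* A = 0 := by simpa using congrArg (· ∘ Sum.inl) hv'
  have hxB : x ᵥ* B = y ᵥ* D := by
    have : x ᵥ* B + y ᵥ* D = 0 := by simpa using congrArg (· ∘ Sum.inr) hv'
    rw [eq_add_of_add_eq_of_charTwo R this, zero_add]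
  obtain ⟨x', hx'⟩ := hinj x hxA ⟨y, hxB.symm⟩
  simp only [toLinearMapRight'_apply] at hx'
  have hy' : (y + x' ᵥ* B) ᵥ* D = 0 := by
    rw [add_vecMul, vecMul_vecMul, ← hB, ← vecMul_vecMul, hx', hxB,
      add_self_eq_zero_of_charTwo R]
  obtain ⟨x'', hx'', y'', hy''⟩ := hsurj _ hy'
  simp only [LinearMap.mem_ker, toLinearMapRight'_apply] at hx'' hy''
  refine ⟨Sum.elim (x' + x'') y'', ?_⟩
  rw [← Sum.elim_comp_inl_inr v]
  simp only [toLinearMapRight'_apply, vecMul_fromBlocks, Sum.elim_comp_inl, Sum.elim_comp_inr,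
    vecMul_zero, add_zero, add_vecMul, hx', hx'', hy'']
  congr 1
  calc x' ᵥ* B + x'' ᵥ* B + (y + x' ᵥ* B + x'' ᵥ* B)
      = (x' ᵥ* B + x' ᵥ* B) + (x'' ᵥ* B + x'' ᵥ* B) + y := by abel
    _ = y := by rw [add_self_eq_zero_of_charTwo R, add_self_eq_zero_of_charTwo R, zero_add,
      zero_add]

section Polynomial

variable [Fintype n] [DecidableEq n] [CommRing R] [IsDomain R]

open Polynomial in
theorem exists_eq_X_smul_mem_ker {G : Matrix n n R[X]} (hG : ∀ i j, (G i j).coeff 0 = 0)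
    (h : ker G.toLinearMapRight' ≤ range G.toLinearMapRight') {v : n → R[X]}
    (hv : v ∈ ker G.toLinearMapRight') : ∃ w ∈ ker G.toLinearMapRight', v = (X : R[X]) • w := by
  obtain ⟨u, rfl⟩ := h hv
  have hX : ∀ j, (u ᵥ* G) j = X * ((u ᵥ* G) j).divX := fun j => by
    have hcoeff : ((u ᵥ* G) j).coeff 0 = 0 := by
      simp [vecMul, dotProduct, mul_coeff_zero, hG]
    simpa [hcoeff] using (X_mul_divX_add ((u ᵥ* G) j)).symm
  set w : n → R[X] := fun j => ((u ᵥ* G) j).divX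
  have hw : u ᵥ* G = (X : R[X]) • w := funext hX
  refine ⟨w, ?_, hw⟩
  rw [LinearMap.mem_ker, toLinearMapRight'_apply] at hv ⊢
  rw [toLinearMapRight'_apply, hw, smul_vecMul] at hv
  exact (smul_eq_zero.mp hv).resolve_left X_ne_zero

open Polynomial in
/-- Every cycle is divisible by all powers of `X`, hence zero; so `G = 0` and every basis vector
is a cycle. -/
theorem isEmpty_of_ker_le_range {G : Matrix n n R[X]} (hG : ∀ i j, (G i j).coeff 0 = 0)
    (hGG : G * G = 0) (h : ker G.toLinearMapRight' ≤ range G.toLinearMapRight') : IsEmpty n := by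
  have hdvd : ∀ k, ∀ v ∈ ker G.toLinearMapRight', ∀ j, X ^ k ∣ v j := by
    intro k
    induction k with
    | zero => simp
    | succ k ih =>
      intro v hv j
      obtain ⟨w, hw, rfl⟩ := exists_eq_X_smul_mem_ker hG h hv
      simpa [pow_succ', smul_eq_mul] using mul_dvd_mul_left X (ih w hw j)
  have hker : ∀ v ∈ ker G.toLinearMapRight', v = 0 := fun v hv => funext fun j =>
    Polynomial.ext fun d => X_pow_dvd_iff.mp (hdvd (d + 1) v hv j) d d.lt_succ_self
  refine ⟨fun i => one_ne_zero (α := R[X]) ?_⟩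
  have hrow : Pi.single i 1 ᵥ* G = 0 :=
    hker _ (by rw [LinearMap.mem_ker, toLinearMapRight'_apply, vecMul_vecMul, hGG, vecMul_zero])
  have hsingle := hker (Pi.single i 1) (by rwa [LinearMap.mem_ker, toLinearMapRight'_apply])
  simpa using congrFun hsingle i

end Polynomial

end Matrix

namespace BasedComplex

variable {B C D E : BasedComplex} {d d₁ d₂ : ℤ}

def dMat (C : BasedComplex) : Matrix C.ι C.ι F2 := Matrix.of C.c

/-- The entry `m x y` is the coefficient of `U ^ k • y` in the image of `x` under a map of
degree `d`, the exponent `k` being forced by the Maslov gradings. -/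
def IsFiltGraded (C D : BasedComplex) (d : ℤ) (m : Matrix C.ι D.ι F2) : Prop :=
  ∀ x y, m x y ≠ 0 → ∃ k : ℕ, D.M y = C.M x + d + 2 * k ∧ D.A y ≤ C.A x + k

theorem isFiltGraded_dMat (C : BasedComplex) : IsFiltGraded C C (-1) C.dMat := fun x y h => by
  obtain ⟨k, hk⟩ := C.hM x y h
  have := C.hA x y h
  exact ⟨k, by omega, by omega⟩

theorem dMat_mul_dMat (C : BasedComplex) : C.dMat * C.dMat = 0 := by
  ext x z : 1
  exact C.d2 x z

theorem dMat_mul_dMat_mul (X : Matrix C.ι C.ι F2) : C.dMat * (C.dMat * X) = 0 := by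
  rw [← mul_assoc, dMat_mul_dMat, zero_mul]

theorem isFiltGraded_one : IsFiltGraded C C 0 1 := by
  intro x y h
  obtain rfl : x = y := by
    by_contra hxy
    exact h (Matrix.one_apply_ne hxy)
  exact ⟨0, by simp, by simp⟩

namespace IsFiltGraded

theorem mul {a : Matrix B.ι C.ι F2} {b : Matrix C.ι D.ι F2} (ha : IsFiltGraded B C d₁ a)
    (hb : IsFiltGraded C D d₂ b) (hd : d₁ + d₂ = d := by norm_num) :
    IsFiltGraded B D d (a * b) := by
  intro x z h
  obtain ⟨y, -, hy⟩ := Finset.exists_ne_zero_of_sum_ne_zero h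
  obtain ⟨k₁, hM₁, hA₁⟩ := ha x y (left_ne_zero_of_mul hy)
  obtain ⟨k₂, hM₂, hA₂⟩ := hb y z (right_ne_zero_of_mul hy)
  exact ⟨k₁ + k₂, by push_cast; omega, by push_cast; omega⟩

theorem add {a b : Matrix C.ι D.ι F2} (ha : IsFiltGraded C D d a) (hb : IsFiltGraded C D d b) :
    IsFiltGraded C D d (a + b) := by
  intro x y h
  by_cases hax : a x y = 0
  · exact hb x y (by simpa [hax] using h)
  · exact ha x y hax

end IsFiltGraded

def uExp (C D : BasedComplex) (d : ℤ) (x : C.ι) (y : D.ι) : ℕ := ((D.M y - C.M x - d) / 2).toNat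

theorem IsFiltGraded.uExp_spec {m : Matrix C.ι D.ι F2} (hm : IsFiltGraded C D d m) {x : C.ι}
    {y : D.ι} (h : m x y ≠ 0) :
    D.M y = C.M x + d + 2 * uExp C D d x y ∧ D.A y ≤ C.A x + uExp C D d x y := by
  obtain ⟨k, hM, hA⟩ := hm x y h
  obtain rfl : uExp C D d x y = k := by unfold uExp; omega
  exact ⟨hM, hA⟩

noncomputable def polyMat (C D : BasedComplex) (d : ℤ) (m : Matrix C.ι D.ι F2) :
    Matrix C.ι D.ι PU :=
  Matrix.of fun x y => Polynomial.C (m x y) * X ^ uExp C D d x y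

theorem polyMat_add (a b : Matrix C.ι D.ι F2) :
    polyMat C D d (a + b) = polyMat C D d a + polyMat C D d b := by
  ext x y : 1
  simp [polyMat, add_mul]

theorem polyMat_one : polyMat C C 0 1 = 1 := by
  ext x y : 1
  rcases eq_or_ne x y with rfl | hxy
  · simp [polyMat, uExp]
  · simp [polyMat, Matrix.one_apply_ne hxy]

theorem polyMat_mul {a : Matrix B.ι C.ι F2} {b : Matrix C.ι D.ι F2} (ha : IsFiltGraded B C d₁ a)
    (hb : IsFiltGraded C D d₂ b) (hd : d₁ + d₂ = d := by norm_num) :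
    polyMat B D d (a * b) = polyMat B C d₁ a * polyMat C D d₂ b := by
  ext x z : 1
  simp only [polyMat, Matrix.mul_apply, Matrix.of_apply, map_sum, Finset.sum_mul]
  refine Finset.sum_congr rfl fun y _ => ?_
  by_cases hy : a x y * b y z = 0
  · rcases mul_eq_zero.mp hy with h | h <;> simp [h]
  have h₁ := ha.uExp_spec (left_ne_zero_of_mul hy)
  have h₂ := hb.uExp_spec (right_ne_zero_of_mul hy)
  have he : uExp B D d x z = uExp B C d₁ x y + uExp C D d₂ y z := by unfold uExp at *; omega
  rw [he, Polynomial.C_mul, pow_add]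
  ring

theorem polyMat_injective : Function.Injective (polyMat C D d) := by
  intro a b h
  ext x y : 1
  simpa [polyMat, Polynomial.coeff_C_mul_X_pow] using
    congrArg (fun p => (p x y).coeff (uExp C D d x y)) h

theorem pDiff_eq (C : BasedComplex) :
    C.pDiff = (polyMat C C (-1) C.dMat).toLinearMapRight' := by
  ext f y
  simp [pDiff, polyMat, dMat, uExp, Matrix.vecMul, dotProduct]

theorem exists_of_coeff_vecMul_polyMat_ne_zero {m : Matrix C.ι D.ι F2} {f : C.PMod} {y : D.ι}
    {k : ℕ} (h : ((f ᵥ* polyMat C D d m) y).coeff k ≠ 0) :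
    ∃ x, m x y ≠ 0 ∧ uExp C D d x y ≤ k ∧ (f x).coeff (k - uExp C D d x y) ≠ 0 := by
  simp only [Matrix.vecMul, dotProduct, polyMat, Matrix.of_apply, Polynomial.finsetSum_coeff,
    ← mul_assoc, mul_comm _ (Polynomial.C _), Polynomial.coeff_mul_X_pow',
    Polynomial.coeff_C_mul] at h
  obtain ⟨x, -, hx⟩ := Finset.exists_ne_zero_of_sum_ne_zero h
  split_ifs at hx with hle
  · exact ⟨x, left_ne_zero_of_mul hx, hle, right_ne_zero_of_mul hx⟩
  · exact absurd rfl hx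

theorem pHomog_vecMul_polyMat {m : Matrix C.ι D.ι F2} (hm : IsFiltGraded C D d m) {g : ℤ}
    {f : C.PMod} (hf : C.PHomog g f) : D.PHomog (g + d) (f ᵥ* polyMat C D d m) := by
  intro y k hk
  obtain ⟨x, hmx, hle, hfx⟩ := exists_of_coeff_vecMul_polyMat_ne_zero hk
  have := hf x _ hfx
  have := (hm.uExp_spec hmx).1
  push_cast [hle] at *
  omega

theorem pInFilt_vecMul_polyMat {m : Matrix C.ι D.ι F2} (hm : IsFiltGraded C D d m) {a : ℤ}
    {f : C.PMod} (hf : C.PInFilt a f) : D.PInFilt a (f ᵥ* polyMat C D d m) := by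
  intro y k hk
  obtain ⟨x, hmx, hle, hfx⟩ := exists_of_coeff_vecMul_polyMat_ne_zero hk
  have := hf x _ hfx
  have := (hm.uExp_spec hmx).2
  push_cast [hle] at *
  omega

noncomputable def ofLin (C D : BasedComplex) (d : ℤ) (L : C.PMod →ₗ[PU] D.PMod) :
    Matrix C.ι D.ι F2 :=
  Matrix.of fun x y => (L (Pi.single x 1) y).coeff (uExp C D d x y)

theorem pHomog_single (x : C.ι) : C.PHomog (C.M x) (Pi.single x 1) := by
  intro x' k h
  rcases eq_or_ne x' x with rfl | hx
  · obtain rfl : k = 0 := by simpa [Polynomial.coeff_one] using h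
    simp
  · simp [hx] at h

theorem pInFilt_single (x : C.ι) : C.PInFilt (C.A x) (Pi.single x 1) := by
  intro x' k h
  rcases eq_or_ne x' x with rfl | hx
  · obtain rfl : k = 0 := by simpa [Polynomial.coeff_one] using h
    simp
  · simp [hx] at h

section ofLin

variable {L : C.PMod →ₗ[PU] D.PMod} (hL : ∀ g f, C.PHomog g f → D.PHomog (g + d) (L f))
include hL

theorem eq_uExp_of_coeff_ne_zero {x : C.ι} {y : D.ι} {k : ℕ}
    (hk : (L (Pi.single x 1) y).coeff k ≠ 0) :
    k = uExp C D d x y ∧ D.M y = C.M x + d + 2 * k := by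
  have := hL _ _ (pHomog_single x) y k hk
  unfold uExp
  omega

theorem polyMat_ofLin : polyMat C D d (ofLin C D d L) = LinearMap.toMatrixRight' L := by
  ext x y : 1
  change _ = L (Pi.single x 1) y
  refine Polynomial.ext fun k => ?_
  simp only [polyMat, ofLin, Matrix.of_apply, Polynomial.coeff_C_mul_X_pow]
  split_ifs with hk
  · simp [hk]
  · by_contra h
    exact hk (eq_uExp_of_coeff_ne_zero hL (by simpa using Ne.symm h)).1

theorem toLinearMapRight'_polyMat_ofLin :
    (polyMat C D d (ofLin C D d L)).toLinearMapRight' = L := by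
  rw [polyMat_ofLin hL]
  exact LinearMap.toMatrixRight'.symm_apply_apply L

theorem isFiltGraded_ofLin (hF : ∀ a f, C.PInFilt a f → D.PInFilt a (L f)) :
    IsFiltGraded C D d (ofLin C D d L) := by
  intro x y h
  obtain ⟨-, hM⟩ := eq_uExp_of_coeff_ne_zero hL h
  have := hF _ _ (pInFilt_single x) y _ h
  exact ⟨_, hM, by omega⟩

end ofLin

/-- The part of `m` that preserves the Alexander filtration level exactly. -/
def grPart (C D : BasedComplex) (d : ℤ) (m : Matrix C.ι D.ι F2) : Matrix C.ι D.ι F2 :=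
  Matrix.of fun x y => if 2 * (D.A y - C.A x) = D.M y - C.M x - d then m x y else 0

theorem IsFiltGraded.grPart {m : Matrix C.ι D.ι F2} (hm : IsFiltGraded C D d m) :
    IsFiltGraded C D d (grPart C D d m) := by
  intro x y h
  simp only [BasedComplex.grPart, Matrix.of_apply] at h
  split_ifs at h
  · exact hm x y h
  · exact absurd rfl h

theorem grPart_one : grPart C C 0 1 = 1 := by
  ext x y : 1
  rcases eq_or_ne x y with rfl | hxy
  · simp [grPart]
  · simp [grPart, Matrix.one_apply_ne hxy]

/-- If a term of a product of filtered maps preserves the filtration level exactly, so does each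
factor. -/
theorem grPart_mul {a : Matrix B.ι C.ι F2} {b : Matrix C.ι D.ι F2} (ha : IsFiltGraded B C d₁ a)
    (hb : IsFiltGraded C D d₂ b) (hd : d₁ + d₂ = d := by norm_num) :
    grPart B D d (a * b) = grPart B C d₁ a * grPart C D d₂ b := by
  ext x z : 1
  simp only [grPart, Matrix.mul_apply, Matrix.of_apply]
  split_ifs with hxz
  · refine Finset.sum_congr rfl fun y _ => ?_
    by_cases hy : a x y * b y z = 0
    · rcases mul_eq_zero.mp hy with h | h <;> simp [h]
    obtain ⟨k₁, hM₁, hA₁⟩ := ha x y (left_ne_zero_of_mul hy)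
    obtain ⟨k₂, hM₂, hA₂⟩ := hb y z (right_ne_zero_of_mul hy)
    rw [if_pos (by omega), if_pos (by omega)]
  · refine (Finset.sum_eq_zero fun y _ => ?_).symm
    by_cases hy : a x y * b y z = 0
    · rcases mul_eq_zero.mp hy with h | h <;> simp [h]
    obtain ⟨k₁, hM₁, hA₁⟩ := ha x y (left_ne_zero_of_mul hy)
    obtain ⟨k₂, hM₂, hA₂⟩ := hb y z (right_ne_zero_of_mul hy)
    split_ifs <;> first | omega | simp

noncomputable def grLin (C D : BasedComplex) (d : ℤ) (m : Matrix C.ι D.ι F2) :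
    C.PMod →ₗ[PU] D.PMod :=
  (polyMat C D d (grPart C D d m)).toLinearMapRight'

theorem grLin_comp {a : Matrix B.ι C.ι F2} {b : Matrix C.ι D.ι F2} (ha : IsFiltGraded B C d₁ a)
    (hb : IsFiltGraded C D d₂ b) (hd : d₁ + d₂ = d := by norm_num) :
    grLin C D d₂ b ∘ₗ grLin B C d₁ a = grLin B D d (a * b) := by
  rw [grLin, grLin, grLin, ← Matrix.toLinearMapRight'_mul, grPart_mul ha hb hd,
    polyMat_mul ha.grPart hb.grPart hd]

theorem grLin_one : grLin C C 0 1 = LinearMap.id := by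
  rw [grLin, grPart_one, polyMat_one, Matrix.toLinearMapRight'_one]

theorem grDiff_eq (C : BasedComplex) : C.grDiff = grLin C C (-1) C.dMat := by
  refine LinearMap.ext fun f => funext fun y => Finset.sum_congr rfl fun x _ => ?_
  simp only [polyMat, grPart, dMat, Matrix.of_apply, uExp, sub_neg_eq_add]
  split_ifs <;> simp

theorem grTrunc_eq {m : Matrix C.ι D.ι F2} (hm : IsFiltGraded C D 0 m) :
    grTrunc C D (polyMat C D 0 m).toLinearMapRight' = grLin C D 0 m := by
  refine LinearMap.ext fun f => funext fun y => Finset.sum_congr rfl fun x _ => congrArg _ ?_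
  simp only [Matrix.toLinearMapRight'_apply, Matrix.single_one_vecMul, Matrix.row_apply, polyMat,
    grPart, Matrix.of_apply]
  by_cases hxy : m x y = 0
  · simp [hxy]
  rw [Polynomial.support_C_mul_X_pow _ hxy, Finset.sum_singleton,
    Polynomial.coeff_C_mul_X_pow, if_pos rfl, Polynomial.C_mul_X_pow_eq_monomial]
  have := (hm.uExp_spec hxy).1
  split_ifs <;> first | rfl | omega | simp

abbrev ofMatrix (ι : Type) [Fintype ι] [DecidableEq ι] (M A : ι → ℤ) (c : Matrix ι ι F2)
    (hc : ∀ x y, c x y ≠ 0 → ∃ k : ℕ, M y = M x + -1 + 2 * k ∧ A y ≤ A x + k)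
    (hcc : c * c = 0) : BasedComplex where
  ι := ι
  M := M
  A := A
  c := c
  hM x y h := (hc x y h).imp fun _ hk => by omega
  hA x y h := by
    obtain ⟨k, hk⟩ := hc x y h
    omega
  d2 x z := congrFun₂ hcc x z

@[simp]
theorem dMat_ofMatrix {ι : Type} [Fintype ι] [DecidableEq ι] {M A : ι → ℤ} {c : Matrix ι ι F2}
    (hc : ∀ x y, c x y ≠ 0 → ∃ k : ℕ, M y = M x + -1 + 2 * k ∧ A y ≤ A x + k)
    (hcc : c * c = 0) : (ofMatrix ι M A c hc hcc).dMat = c :=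
  rfl

theorem pHomotopic_of_matrix {H a b : Matrix C.ι D.ι F2} (hH : IsFiltGraded C D 1 H)
    (h : C.dMat * H + H * D.dMat = a + b) :
    PHomotopic C D (polyMat C D 0 a).toLinearMapRight' (polyMat C D 0 b).toLinearMapRight' := by
  refine ⟨(polyMat C D 1 H).toLinearMapRight', fun _ _ hf => pInFilt_vecMul_polyMat hH hf,
    fun _ _ hf => pHomog_vecMul_polyMat hH hf, fun f => ?_⟩
  simp only [pDiff_eq, Matrix.toLinearMapRight'_apply, Matrix.vecMul_vecMul]
  rw [← polyMat_mul hH (isFiltGraded_dMat D) (d := 0),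
    ← polyMat_mul (isFiltGraded_dMat C) hH (d := 0), ← Matrix.vecMul_add, ← polyMat_add,
    add_comm, h, polyMat_add, Matrix.vecMul_add]

end BasedComplex

namespace PChainMap

open BasedComplex

variable {C D : BasedComplex}

noncomputable def ofMatrix (m : Matrix C.ι D.ι F2) (hm : IsFiltGraded C D 0 m)
    (hcomm : C.dMat * m = m * D.dMat) : PChainMap C D where
  toFun := (polyMat C D 0 m).toLinearMapRight'
  comm f := by
    simp only [pDiff_eq, Matrix.toLinearMapRight'_apply, Matrix.vecMul_vecMul]
    rw [← polyMat_mul (isFiltGraded_dMat C) hm (d := -1),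
      ← polyMat_mul hm (isFiltGraded_dMat D) (d := -1), hcomm]
  graded g f hf := by simpa using pHomog_vecMul_polyMat hm hf
  filtered _ _ hf := pInFilt_vecMul_polyMat hm hf

variable (φ : PChainMap C D)

noncomputable def mat : Matrix C.ι D.ι F2 := ofLin C D 0 φ.toFun

theorem pHomog_apply_add_zero {g : ℤ} {f : C.PMod} (hf : C.PHomog g f) :
    D.PHomog (g + 0) (φ.toFun f) := by
  simpa using φ.graded g f hf

theorem isFiltGraded_mat : IsFiltGraded C D 0 φ.mat :=
  isFiltGraded_ofLin (fun _ _ => φ.pHomog_apply_add_zero) φ.filtered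

theorem toLinearMapRight'_polyMat_mat : (polyMat C D 0 φ.mat).toLinearMapRight' = φ.toFun :=
  toLinearMapRight'_polyMat_ofLin fun _ _ => φ.pHomog_apply_add_zero

theorem dMat_mul_mat : C.dMat * φ.mat = φ.mat * D.dMat := by
  apply polyMat_injective (d := -1)
  apply Matrix.toLinearMapRight'.injective
  rw [polyMat_mul (isFiltGraded_dMat C) φ.isFiltGraded_mat,
    polyMat_mul φ.isFiltGraded_mat (isFiltGraded_dMat D), Matrix.toLinearMapRight'_mul,
    Matrix.toLinearMapRight'_mul, ← pDiff_eq, ← pDiff_eq, toLinearMapRight'_polyMat_mat]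
  exact LinearMap.ext φ.comm

end PChainMap

namespace BasedComplex

section Cancel

variable {E : BasedComplex} {x₀ y₀ : E.ι}

/-! Gaussian elimination of an arrow `x₀ → y₀` with coefficient `1` that preserves the
filtration level. With `S = single y₀ x₀ 1`, the differential of the reduced complex is
`c + c S c`, with inclusion `1 + c S` and projection `1 + S c`, all restricted to the
complement of `{x₀, y₀}`; the square-zero `S` is a homotopy from their composite to the
identity. -/

def elimDiff (E : BasedComplex) (x₀ y₀ : E.ι) : Matrix E.ι E.ι F2 :=
  E.dMat + E.dMat * Matrix.single y₀ x₀ 1 * E.dMat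

def elimIncl (E : BasedComplex) (x₀ y₀ : E.ι) : Matrix E.ι E.ι F2 :=
  1 + E.dMat * Matrix.single y₀ x₀ 1

def elimProj (E : BasedComplex) (x₀ y₀ : E.ι) : Matrix E.ι E.ι F2 :=
  1 + Matrix.single y₀ x₀ 1 * E.dMat

theorem elimIncl_mul_dMat : elimIncl E x₀ y₀ * E.dMat = elimDiff E x₀ y₀ := by
  rw [elimIncl, elimDiff, add_mul, one_mul]

theorem dMat_mul_elimProj : E.dMat * elimProj E x₀ y₀ = elimDiff E x₀ y₀ := by
  rw [elimProj, elimDiff, mul_add, mul_one, mul_assoc]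

theorem elimDiff_mul_elimIncl : elimDiff E x₀ y₀ * elimIncl E x₀ y₀ = elimDiff E x₀ y₀ := by
  simp only [elimDiff, elimIncl, mul_add, add_mul, mul_one, mul_assoc, dMat_mul_dMat_mul, mul_zero,
    add_zero]

theorem elimProj_mul_elimDiff : elimProj E x₀ y₀ * elimDiff E x₀ y₀ = elimDiff E x₀ y₀ := by
  simp only [elimDiff, elimProj, mul_add, add_mul, one_mul, mul_assoc, dMat_mul_dMat_mul,
    dMat_mul_dMat, mul_zero, add_zero]

theorem elimDiff_mul_elimDiff : elimDiff E x₀ y₀ * elimDiff E x₀ y₀ = 0 := by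
  calc elimDiff E x₀ y₀ * elimDiff E x₀ y₀
      = elimIncl E x₀ y₀ * (E.dMat * E.dMat) * elimProj E x₀ y₀ := by
        nth_rw 1 [← elimIncl_mul_dMat]
        rw [← dMat_mul_elimProj, mul_assoc, mul_assoc, mul_assoc]
    _ = 0 := by rw [dMat_mul_dMat, mul_zero, zero_mul]

theorem elimIncl_mul_elimProj (hne : x₀ ≠ y₀) : elimIncl E x₀ y₀ * elimProj E x₀ y₀ =
    1 + E.dMat * Matrix.single y₀ x₀ 1 + Matrix.single y₀ x₀ 1 * E.dMat := by
  have h : ∀ X, Matrix.single y₀ x₀ (1 : F2) * (Matrix.single y₀ x₀ 1 * X) = 0 := fun X => by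
    rw [← mul_assoc, Matrix.single_mul_single_of_ne _ _ _ _ hne, zero_mul]
  simp only [elimIncl, elimProj, mul_add, add_mul, one_mul, mul_one, mul_assoc, h, mul_zero,
    add_zero, add_assoc]

theorem elimProj_mul_elimIncl : elimProj E x₀ y₀ * elimIncl E x₀ y₀ =
    1 + E.dMat * Matrix.single y₀ x₀ 1 + Matrix.single y₀ x₀ 1 * E.dMat := by
  simp only [elimIncl, elimProj, mul_add, add_mul, one_mul, mul_one, mul_assoc, dMat_mul_dMat_mul,
    mul_zero, add_zero]
  abel

theorem submatrix_val_mul_submatrix_val {l q l' q' : Type*} {a : Matrix l E.ι F2}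
    {b : Matrix E.ι q F2} (ha : ∀ i, a i y₀ = 0) (hb : ∀ j, b x₀ j = 0) (f : l' → l) (g : q' → q) :
    (a.submatrix f Subtype.val : Matrix l' {z // z ≠ x₀ ∧ z ≠ y₀} F2) *
      (b.submatrix Subtype.val g : Matrix {z // z ≠ x₀ ∧ z ≠ y₀} q' F2) =
      (a * b).submatrix f g := by
  refine Matrix.submatrix_mul_submatrix_of_injective a b Subtype.val_injective (fun k hk => ?_) f g
  by_cases hkx : k = x₀
  · exact .inr (hkx ▸ hb)
  by_cases hky : k = y₀
  · exact .inl (hky ▸ ha)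
  exact absurd ⟨⟨k, hkx, hky⟩, rfl⟩ hk

section unit

variable (hxy : E.dMat x₀ y₀ = 1)
include hxy

theorem elimIncl_apply_left (w : E.ι) : elimIncl E x₀ y₀ x₀ w = 0 := by
  rcases eq_or_ne w x₀ with rfl | hw
  · simp [elimIncl, hxy]
    decide
  · simp [elimIncl, Matrix.one_apply_ne hw.symm, hw]

theorem elimProj_apply_right (w : E.ι) : elimProj E x₀ y₀ w y₀ = 0 := by
  rcases eq_or_ne w y₀ with rfl | hw
  · simp [elimProj, hxy]
    decide
  · simp [elimProj, Matrix.one_apply_ne hw, hw]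

theorem elimDiff_apply_left (w : E.ι) : elimDiff E x₀ y₀ x₀ w = 0 := by
  simp [← elimIncl_mul_dMat, Matrix.mul_apply, elimIncl_apply_left hxy]

theorem elimDiff_apply_right (w : E.ι) : elimDiff E x₀ y₀ w y₀ = 0 := by
  simp [← dMat_mul_elimProj, Matrix.mul_apply, elimProj_apply_right hxy]

end unit

section filtered

variable (hM : E.M y₀ = E.M x₀ - 1) (hA : E.A y₀ = E.A x₀)
include hM hA

theorem isFiltGraded_single : IsFiltGraded E E 1 (Matrix.single y₀ x₀ 1) := by
  intro y x h
  obtain ⟨rfl, rfl⟩ : y₀ = y ∧ x₀ = x := by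
    by_contra hc
    exact h (by simp [hc])
  exact ⟨0, by omega, by omega⟩

theorem isFiltGraded_elimDiff : IsFiltGraded E E (-1) (elimDiff E x₀ y₀) :=
  (isFiltGraded_dMat E).add
    (((isFiltGraded_dMat E).mul (isFiltGraded_single hM hA) (d := 0)).mul (isFiltGraded_dMat E))

theorem isFiltGraded_elimIncl : IsFiltGraded E E 0 (elimIncl E x₀ y₀) :=
  isFiltGraded_one.add ((isFiltGraded_dMat E).mul (isFiltGraded_single hM hA))

theorem isFiltGraded_elimProj : IsFiltGraded E E 0 (elimProj E x₀ y₀) :=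
  isFiltGraded_one.add ((isFiltGraded_single hM hA).mul (isFiltGraded_dMat E))

end filtered

variable (hxy : E.dMat x₀ y₀ = 1) (hM : E.M y₀ = E.M x₀ - 1) (hA : E.A y₀ = E.A x₀)

abbrev cancel : BasedComplex :=
  ofMatrix {z : E.ι // z ≠ x₀ ∧ z ≠ y₀} (fun z => E.M z) (fun z => E.A z)
    ((elimDiff E x₀ y₀).submatrix Subtype.val Subtype.val)
    (fun z w h => isFiltGraded_elimDiff hM hA z w h)
    (by rw [submatrix_val_mul_submatrix_val (elimDiff_apply_right hxy) (elimDiff_apply_left hxy),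
      elimDiff_mul_elimDiff, Matrix.submatrix_zero]; rfl)

theorem dMat_cancel :
    (cancel hxy hM hA).dMat = (elimDiff E x₀ y₀).submatrix Subtype.val Subtype.val :=
  rfl

def cancelIncl : Matrix (cancel hxy hM hA).ι E.ι F2 :=
  (elimIncl E x₀ y₀).submatrix Subtype.val id

def cancelProj : Matrix E.ι (cancel hxy hM hA).ι F2 :=
  (elimProj E x₀ y₀).submatrix id Subtype.val

theorem cancelIncl_mul_dMat :
    cancelIncl hxy hM hA * E.dMat = (cancel hxy hM hA).dMat * cancelIncl hxy hM hA := by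
  have h := Matrix.submatrix_mul (elimIncl E x₀ y₀) E.dMat
    (Subtype.val : {z // z ≠ x₀ ∧ z ≠ y₀} → E.ι) id id Function.bijective_id
  rw [Matrix.submatrix_id_id] at h
  rw [cancelIncl, ← h, elimIncl_mul_dMat, dMat_cancel, submatrix_val_mul_submatrix_val
    (elimDiff_apply_right hxy) (elimIncl_apply_left hxy), elimDiff_mul_elimIncl]

theorem dMat_mul_cancelProj :
    E.dMat * cancelProj hxy hM hA = cancelProj hxy hM hA * (cancel hxy hM hA).dMat := by
  have h := Matrix.submatrix_mul E.dMat (elimProj E x₀ y₀) id id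
    (Subtype.val : {z // z ≠ x₀ ∧ z ≠ y₀} → E.ι) Function.bijective_id
  rw [Matrix.submatrix_id_id] at h
  rw [cancelProj, ← h, dMat_mul_elimProj, dMat_cancel, submatrix_val_mul_submatrix_val
    (elimProj_apply_right hxy) (elimDiff_apply_left hxy), elimProj_mul_elimDiff]

theorem cancelIncl_mul_cancelProj : cancelIncl hxy hM hA * cancelProj hxy hM hA = 1 := by
  rw [cancelIncl, cancelProj, ← Matrix.submatrix_mul _ _ _ _ _ Function.bijective_id,
    elimIncl_mul_elimProj (fun h => by subst h; omega)]
  ext z z' : 1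
  simp [Matrix.one_apply, Subtype.ext_iff, Matrix.mul_single_apply_of_ne _ _ _ _ _ z'.2.1,
    Matrix.single_mul_apply_of_ne _ _ _ _ _ z.2.2]

theorem cancelProj_mul_cancelIncl : cancelProj hxy hM hA * cancelIncl hxy hM hA + 1 =
    E.dMat * Matrix.single y₀ x₀ 1 + Matrix.single y₀ x₀ 1 * E.dMat := by
  rw [cancelProj, cancelIncl, submatrix_val_mul_submatrix_val (elimProj_apply_right hxy)
    (elimIncl_apply_left hxy), Matrix.submatrix_id_id, elimProj_mul_elimIncl, add_comm,
    ← add_assoc, ← add_assoc, add_self_eq_zero_of_charTwo F2, zero_add]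

theorem isFiltGraded_cancelIncl : IsFiltGraded (cancel hxy hM hA) E 0 (cancelIncl hxy hM hA) :=
  fun z w h => isFiltGraded_elimIncl hM hA z w h

theorem isFiltGraded_cancelProj : IsFiltGraded E (cancel hxy hM hA) 0 (cancelProj hxy hM hA) :=
  fun w z h => isFiltGraded_elimProj hM hA w z h

theorem card_cancel_lt : Fintype.card (cancel hxy hM hA).ι < Fintype.card E.ι :=
  Fintype.card_subtype_lt (x := x₀) (by simp)

theorem ker_grDiff_cancel_le (h : ker E.grDiff ≤ range E.grDiff) :
    ker (cancel hxy hM hA).grDiff ≤ range (cancel hxy hM hA).grDiff := by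
  have hI := isFiltGraded_cancelIncl hxy hM hA
  have hP := isFiltGraded_cancelProj hxy hM hA
  rw [grDiff_eq] at h ⊢
  refine LinearMap.ker_le_range_of_retract (grLin _ E 0 (cancelIncl hxy hM hA))
    (grLin E _ 0 (cancelProj hxy hM hA)) ?_ ?_ ?_ h
  · rw [grLin_comp hI (isFiltGraded_dMat E) (d := -1),
      grLin_comp (isFiltGraded_dMat _) hI (d := -1), cancelIncl_mul_dMat]
  · rw [grLin_comp (isFiltGraded_dMat E) hP (d := -1),
      grLin_comp hP (isFiltGraded_dMat _) (d := -1), dMat_mul_cancelProj]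
  · rw [grLin_comp hI hP (d := 0), cancelIncl_mul_cancelProj, grLin_one]

theorem exists_contraction_of_cancel {H' : Matrix (cancel hxy hM hA).ι (cancel hxy hM hA).ι F2}
    (hH' : IsFiltGraded _ _ 1 H')
    (h' : (cancel hxy hM hA).dMat * H' + H' * (cancel hxy hM hA).dMat = 1) :
    ∃ H, IsFiltGraded E E 1 H ∧ E.dMat * H + H * E.dMat = 1 := by
  set I := cancelIncl hxy hM hA
  set P := cancelProj hxy hM hA
  set c' := (cancel hxy hM hA).dMat
  set S : Matrix E.ι E.ι F2 := Matrix.single y₀ x₀ 1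
  refine ⟨S + P * H' * I, (isFiltGraded_single hM hA).add
    (((isFiltGraded_cancelProj hxy hM hA).mul hH' (d := 1)).mul
      (isFiltGraded_cancelIncl hxy hM hA)), ?_⟩
  have e₁ : E.dMat * (P * H' * I) = P * (c' * H') * I := by
    rw [← Matrix.mul_assoc, ← Matrix.mul_assoc, dMat_mul_cancelProj, Matrix.mul_assoc P c' H']
  have e₂ : P * H' * I * E.dMat = P * (H' * c') * I := by
    rw [Matrix.mul_assoc, cancelIncl_mul_dMat, ← Matrix.mul_assoc, Matrix.mul_assoc P H' c']
  calc E.dMat * (S + P * H' * I) + (S + P * H' * I) * E.dMat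
      = (E.dMat * S + S * E.dMat) + P * (c' * H' + H' * c') * I := by
        rw [mul_add, add_mul, e₁, e₂, Matrix.mul_add, Matrix.add_mul]
        abel
    _ = (P * I + 1) + P * I := by
        rw [h', Matrix.mul_one, cancelProj_mul_cancelIncl]
    _ = 1 := by
        rw [add_comm, ← add_assoc, add_self_eq_zero_of_charTwo F2, zero_add]

end Cancel

variable {E : BasedComplex}

/-- Otherwise every entry of the differential of `gr(E)` is divisible by `U`. -/
theorem exists_unit_of_ker_le_range [Nonempty E.ι] (h : ker E.grDiff ≤ range E.grDiff) :
    ∃ x₀ y₀, E.dMat x₀ y₀ = 1 ∧ E.M y₀ = E.M x₀ - 1 ∧ E.A y₀ = E.A x₀ := by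
  by_contra! hno
  have hgr := (isFiltGraded_dMat E).grPart
  refine not_isEmpty_of_nonempty E.ι (Matrix.isEmpty_of_ker_le_range
    (G := polyMat E E (-1) (grPart E E (-1) E.dMat)) (fun x y => ?_) ?_ (by rwa [grDiff_eq] at h))
  · rw [polyMat, Matrix.of_apply, Polynomial.coeff_C_mul_X_pow]
    refine ite_eq_right_iff.mpr fun he => ?_
    by_contra hne
    have hM := (hgr.uExp_spec hne).1
    simp only [grPart, Matrix.of_apply, ite_eq_right_iff, not_forall] at hne
    obtain ⟨hA, hc⟩ := hne
    exact hno x y (Fin.eq_one_of_ne_zero _ hc) (by omega) (by omega)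
  · rw [← polyMat_mul hgr hgr (d := -2),
      ← grPart_mul (isFiltGraded_dMat E) (isFiltGraded_dMat E) (d := -2), dMat_mul_dMat]
    ext x y : 1
    simp [polyMat, grPart]

theorem exists_contraction (E : BasedComplex) (h : ker E.grDiff ≤ range E.grDiff) :
    ∃ H, IsFiltGraded E E 1 H ∧ E.dMat * H + H * E.dMat = 1 := by
  induction hn : Fintype.card E.ι using Nat.strong_induction_on generalizing E with
  | _ n ih =>
  rcases isEmpty_or_nonempty E.ι with hE | hE
  · exact ⟨0, fun x => isEmptyElim x, Subsingleton.elim _ _⟩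
  obtain ⟨x₀, y₀, hxy, hM, hA⟩ := exists_unit_of_ker_le_range h
  obtain ⟨H', hH', h'⟩ := ih _ (hn ▸ card_cancel_lt hxy hM hA) (cancel hxy hM hA)
    (ker_grDiff_cancel_le hxy hM hA h) rfl
  exact exists_contraction_of_cancel hxy hM hA hH' h'

section Cone

variable {C D : BasedComplex} {m : Matrix C.ι D.ι F2} (hm : IsFiltGraded C D 0 m)
  (hcomm : C.dMat * m = m * D.dMat)

/-- No signs are needed in characteristic `2`. -/
abbrev cone : BasedComplex :=
  ofMatrix (C.ι ⊕ D.ι) (Sum.elim (C.M · + 1) D.M) (Sum.elim C.A D.A)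
    (Matrix.fromBlocks C.dMat m 0 D.dMat)
    (by
      rintro (x | y) (x' | y') h
      · obtain ⟨k, hM, hA⟩ := isFiltGraded_dMat C x x' h
        exact ⟨k, by simp only [Sum.elim_inl]; omega, hA⟩
      · obtain ⟨k, hM, hA⟩ := hm x y' h
        exact ⟨k, by simp only [Sum.elim_inl, Sum.elim_inr]; omega, hA⟩
      · exact absurd rfl h
      · exact isFiltGraded_dMat D y y' h)
    (by
      rw [Matrix.fromBlocks_multiply, dMat_mul_dMat, dMat_mul_dMat, hcomm,
        add_self_eq_zero_of_charTwo F2]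
      simp)

theorem grLin_cone : grLin (cone hm hcomm) (cone hm hcomm) (-1) (cone hm hcomm).dMat =
    (Matrix.fromBlocks (polyMat C C (-1) (grPart C C (-1) C.dMat)) (polyMat C D 0 (grPart C D 0 m))
      0 (polyMat D D (-1) (grPart D D (-1) D.dMat))).toLinearMapRight' := by
  rw [grLin]
  congr 1
  ext (x | y) (x' | y') : 1 <;>
    simp only [polyMat, grPart, uExp, dMat_ofMatrix, Matrix.of_apply, Matrix.fromBlocks_apply₁₁,
      Matrix.fromBlocks_apply₁₂, Matrix.fromBlocks_apply₂₁, Matrix.fromBlocks_apply₂₂,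
      Sum.elim_inl, Sum.elim_inr, Matrix.zero_apply]
  · ring_nf
  · ring_nf
  · split_ifs <;> simp
  · rfl

theorem ker_grDiff_cone_le (hq : GrQuasiIso C D (polyMat C D 0 m).toLinearMapRight') :
    ker (cone hm hcomm).grDiff ≤ range (cone hm hcomm).grDiff := by
  rw [grDiff_eq, grLin_cone]
  simp only [GrQuasiIso, grDiff_eq, grTrunc_eq hm, grLin] at hq
  refine Matrix.ker_le_range_toLinearMapRight'_fromBlocks ?_ hq.1 hq.2
  have hC := isFiltGraded_dMat C
  have hD := isFiltGraded_dMat D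
  rw [← polyMat_mul hC.grPart hm.grPart (d := -1), ← polyMat_mul hm.grPart hD.grPart (d := -1),
    ← grPart_mul hC hm (d := -1), ← grPart_mul hm hD (d := -1), hcomm]

variable {hm hcomm} {H : Matrix (cone hm hcomm).ι (cone hm hcomm).ι F2} {d : ℤ}

theorem isFiltGraded_toBlocks₁₁ (hH : IsFiltGraded _ _ d H) :
    IsFiltGraded C C d H.toBlocks₁₁ := fun x x' h => by
  obtain ⟨k, hM, hA⟩ := hH (.inl x) (.inl x') h
  exact ⟨k, by simp only [Sum.elim_inl] at hM; omega, hA⟩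

theorem isFiltGraded_toBlocks₂₁ (hH : IsFiltGraded _ _ d H) :
    IsFiltGraded D C (d - 1) H.toBlocks₂₁ := fun y x h => by
  obtain ⟨k, hM, hA⟩ := hH (.inr y) (.inl x) h
  exact ⟨k, by simp only [Sum.elim_inl, Sum.elim_inr] at hM; omega, hA⟩

theorem isFiltGraded_toBlocks₂₂ (hH : IsFiltGraded _ _ d H) :
    IsFiltGraded D D d H.toBlocks₂₂ :=
  fun y y' h => hH (.inr y) (.inr y') h

theorem htpyInverse_of_cone_contraction
    (h : (cone hm hcomm).dMat * H + H * (cone hm hcomm).dMat = 1) :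
    D.dMat * H.toBlocks₂₁ = H.toBlocks₂₁ * C.dMat ∧
      C.dMat * H.toBlocks₁₁ + H.toBlocks₁₁ * C.dMat = m * H.toBlocks₂₁ + 1 ∧
      D.dMat * H.toBlocks₂₂ + H.toBlocks₂₂ * D.dMat = H.toBlocks₂₁ * m + 1 := by
  rw [← Matrix.fromBlocks_toBlocks H, dMat_ofMatrix, Matrix.fromBlocks_multiply,
    Matrix.fromBlocks_multiply, Matrix.fromBlocks_add, ← Matrix.fromBlocks_one,
    Matrix.fromBlocks_inj] at h
  obtain ⟨h₁₁, -, h₂₁, h₂₂⟩ := h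
  simp only [Matrix.zero_mul, Matrix.mul_zero, zero_add, add_zero] at h₁₁ h₂₁ h₂₂
  refine ⟨by rw [eq_add_of_add_eq_of_charTwo F2 h₂₁, zero_add], ?_, ?_⟩
  · rw [add_comm _ (1 : Matrix C.ι C.ι F2)]
    exact eq_add_of_add_eq_of_charTwo F2 (by rw [← h₁₁]; abel)
  · rw [add_comm _ (1 : Matrix D.ι D.ι F2)]
    exact eq_add_of_add_eq_of_charTwo F2 (by rw [← h₂₂]; abel)

end Cone

variable {C D : BasedComplex}

theorem exists_htpyInverse {m : Matrix C.ι D.ι F2} (hm : IsFiltGraded C D 0 m)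
    (hcomm : C.dMat * m = m * D.dMat)
    (hq : GrQuasiIso C D (polyMat C D 0 m).toLinearMapRight') :
    ∃ ψ : PChainMap D C,
      PHomotopic C C (ψ.toFun ∘ₗ (polyMat C D 0 m).toLinearMapRight') LinearMap.id ∧
      PHomotopic D D ((polyMat C D 0 m).toLinearMapRight' ∘ₗ ψ.toFun) LinearMap.id := by
  obtain ⟨H, hH, hcontr⟩ := exists_contraction _ (ker_grDiff_cone_le hm hcomm hq)
  obtain ⟨hψ, h₁, h₂⟩ := htpyInverse_of_cone_contraction hcontr
  have hψm : IsFiltGraded D C 0 H.toBlocks₂₁ := by simpa using isFiltGraded_toBlocks₂₁ hH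
  refine ⟨PChainMap.ofMatrix _ hψm hψ, ?_, ?_⟩
  · rw [PChainMap.ofMatrix, ← Matrix.toLinearMapRight'_mul, ← polyMat_mul hm hψm (d := 0),
      ← Matrix.toLinearMapRight'_one, ← polyMat_one]
    exact pHomotopic_of_matrix (isFiltGraded_toBlocks₁₁ hH) h₁
  · rw [PChainMap.ofMatrix, ← Matrix.toLinearMapRight'_mul, ← polyMat_mul hψm hm (d := 0),
      ← Matrix.toLinearMapRight'_one, ← polyMat_one]
    exact pHomotopic_of_matrix (isFiltGraded_toBlocks₂₂ hH) h₂

end BasedComplex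

/-- If two `ℤ`-graded, `ℤ`-filtered chain complexes over `𝔽₂[U]` (free, finitely
generated, filtration bounded below) are filtered quasi-isomorphic, then they are
filtered chain homotopy equivalent; in particular a filtered quasi-isomorphism `φ`
between them is itself a filtered chain homotopy equivalence. -/
theorem filteredHtpyEquiv_of_grQuasiIso (C D : BasedComplex)
    (φ : PChainMap C D) (hq : GrQuasiIso C D φ.toFun) :
    FilteredHtpyEquiv C D ∧
      ∃ ψ : PChainMap D C,
        PHomotopic C C (ψ.toFun.comp φ.toFun) LinearMap.id ∧
        PHomotopic D D (φ.toFun.comp ψ.toFun) LinearMap.id := by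
  rw [← φ.toLinearMapRight'_polyMat_mat] at hq
  obtain ⟨ψ, h₁, h₂⟩ := BasedComplex.exists_htpyInverse φ.isFiltGraded_mat φ.dMat_mul_mat hq
  rw [φ.toLinearMapRight'_polyMat_mat] at h₁ h₂
  exact ⟨⟨φ, ψ, h₁, h₂⟩, ψ, h₁, h₂⟩
end
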